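/- In the setting of an abelian ℤ-grading of a simple Lie algebra, for w ∈ W⁰, a root γ ∈ N(w) is a maximal element of N(w) (in the induced order on Δ(1)) if and only if w(γ) ∈ −Π; equivalently, max(N(w)) = −w⁻¹(Π) ∩ Δ(1). -/

import Mathlib

variable {V : Type*} [NormedAddCommGroup V] [InnerProductSpace ℝ V]

/-- Data of a reduced crystallographic root system `Δ` in a Euclidean space, together with a
choice of positive system `Δ⁺` and the corresponding simple roots `Π`. -/
structure RootSystemData (V : Type*) [NormedAddCommGroup V] [InnerProductSpace ℝ V] where
  roots : Finset V
  pos : Finset V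
  simples : Finset V
  zero_not_mem : (0 : V) ∉ roots
  neg_mem : ∀ γ ∈ roots, -γ ∈ roots
  reduced : ∀ γ ∈ roots, ∀ c : ℝ, c • γ ∈ roots → c = 1 ∨ c = -1
  crystallographic : ∀ γ ∈ roots, ∀ δ ∈ roots,
    ∃ n : ℤ, 2 * (inner ℝ γ δ : ℝ) / (inner ℝ δ δ : ℝ) = (n : ℝ)
  reflect_mem : ∀ γ ∈ roots, ∀ δ ∈ roots,
    γ - (2 * (inner ℝ γ δ : ℝ) / (inner ℝ δ δ : ℝ)) • δ ∈ roots
  pos_subset : pos ⊆ roots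
  pos_or_neg : ∀ γ ∈ roots, γ ∈ pos ∨ -γ ∈ pos
  pos_neg_disjoint : ∀ γ ∈ pos, -γ ∉ pos
  simples_subset : simples ⊆ pos
  simples_indep : LinearIndependent ℝ (fun α : {x // x ∈ simples} => (α : V))
  pos_combo : ∀ γ ∈ pos, ∃ c : V → ℕ, γ = ∑ α ∈ simples, (c α : ℝ) • α

/-- Irreducibility: the roots admit no partition into two nonempty mutually orthogonal parts. -/
def RootSystemData.Irreducible (R : RootSystemData V) : Prop :=
  ∀ A B : Set V, A ∪ B = ↑R.roots → Disjoint A B →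
    (∀ a ∈ A, ∀ b ∈ B, (inner ℝ a b : ℝ) = 0) → A = ∅ ∨ B = ∅

/-- The reflection in the hyperplane orthogonal to `δ`. -/
noncomputable def reflAt (δ : V) : Function.End V :=
  fun x => x - (2 * (inner ℝ x δ : ℝ) / (inner ℝ δ δ : ℝ)) • δ

/-- The Weyl group, generated by the reflections in the roots (each reflection is an
involution, so the closure as a monoid of endomorphisms coincides with the generated group). -/
def weylGroup (R : RootSystemData V) : Submonoid (Function.End V) :=
  Submonoid.closure {f | ∃ δ ∈ R.roots, f = reflAt δ}

/-- The inversion set `N(w) = {γ ∈ Δ⁺ : w(γ) < 0}`. -/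
def invSet (R : RootSystemData V) (w : Function.End V) : Set V :=
  {γ | γ ∈ R.pos ∧ -(w γ) ∈ R.pos}

/-- The pairing `(γ, θ∨) = 2(γ,θ)/(θ,θ)`. -/
noncomputable def copair (θ γ : V) : ℝ := 2 * (inner ℝ γ θ : ℝ) / (inner ℝ θ θ : ℝ)

/-- `μ ≤ γ` iff `γ − μ` is a nonnegative integer combination of the simple roots lying in
the subset `Z`. -/
def rootLEon (simples : Finset V) (Z : Set V) (μ γ : V) : Prop :=
  ∃ c : V → ℕ, (∀ α, α ∉ Z → c α = 0) ∧ γ = μ + ∑ α ∈ simples, (c α : ℝ) • α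

/-- The weights of `g(1)`: roots with `γ(h̃) = 1` for the defining functional `ℓ`. -/
def gradeOne (R : RootSystemData V) (ℓ : V →ₗ[ℝ] ℝ) : Set V :=
  {γ | γ ∈ R.roots ∧ ℓ γ = 1}

/-- The minimal-length coset representatives
`W⁰ = {w ∈ W : w(α) ∈ Δ⁺ for all α ∈ Δ(0)⁺}`. -/
def minLengthReps (R : RootSystemData V) (ℓ : V →ₗ[ℝ] ℝ) : Set (Function.End V) :=
  {w | w ∈ weylGroup R ∧ ∀ α, α ∈ R.pos → ℓ α = 0 → w α ∈ R.pos}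

/-- The upper ideal `I_w = Δ(1) \ N(w)` attached to `w ∈ W⁰`. -/
def idealOf (R : RootSystemData V) (ℓ : V →ₗ[ℝ] ℝ) (w : Function.End V) : Set V :=
  gradeOne R ℓ \ invSet R w

/-- The minimal elements of `S` with respect to the relation `r`. -/
def minimalsRel (r : V → V → Prop) (S : Set V) : Set V :=
  {x | x ∈ S ∧ ∀ y ∈ S, r y x → y = x}

/-- The maximal elements of `S` with respect to the relation `r`. -/
def maximalsRel (r : V → V → Prop) (S : Set V) : Set V :=
  {x | x ∈ S ∧ ∀ y ∈ S, r x y → y = x}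


/-!
Write `μ = -w γ ∈ Δ⁺`. If `μ` is simple, then moving `γ` up by roots of degree `0` only raises
the height of `-w γ` (as `w ∈ W⁰` keeps `Δ(0)⁺` positive), so `γ` is maximal in `N(w)`. If `μ`
is not simple, some simple `β` has `(μ, β) > 0`, so `μ - β ∈ Δ⁺`, and
`-γ = w⁻¹ β + w⁻¹ (μ - β)` splits `-γ` into two roots of degrees `{0, -1}` (the grading is
abelian). Adding the degree-`0` summand to `γ` gives a larger element of `N(w)`.
-/

lemma reflAt_involutive {δ : V} (hδ : δ ≠ 0) : Function.Involutive (reflAt δ) := by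
  have hδδ : (inner ℝ δ δ : ℝ) ≠ 0 := inner_self_ne_zero.2 hδ
  intro x
  simp only [reflAt, inner_sub_left, real_inner_smul_left]
  match_scalars
  · ring
  · field_simp; ring

noncomputable def reflEquiv {δ : V} (hδ : δ ≠ 0) : V ≃ₗ[ℝ] V :=
  LinearEquiv.ofInvolutive
    { toFun := reflAt δ
      map_add' := fun x y => by
        simp only [reflAt, inner_add_left]
        match_scalars <;> ring
      map_smul' := fun c x => by
        simp only [reflAt, real_inner_smul_left, RingHom.id_apply]
        match_scalars <;> ring }
    (reflAt_involutive hδ)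

lemma reflEquiv_symm_apply {δ : V} (hδ : δ ≠ 0) (x : V) : (reflEquiv hδ).symm x = reflAt δ x :=
  (reflEquiv hδ).symm_apply_eq.2 (reflAt_involutive hδ x).symm

namespace RootSystemData

variable (R : RootSystemData V)

lemma ne_zero_of_mem_roots {γ : V} (hγ : γ ∈ R.roots) : γ ≠ 0 :=
  fun h => R.zero_not_mem (h ▸ hγ)

lemma ne_zero_of_mem_pos {γ : V} (hγ : γ ∈ R.pos) : γ ≠ 0 :=
  R.ne_zero_of_mem_roots (R.pos_subset hγ)

lemma exists_height :
    ∃ h : V →ₗ[ℝ] ℝ, (∀ α ∈ R.simples, h α = 1) ∧ ∀ γ ∈ R.pos, 1 ≤ h γ := by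
  classical
  have hsi : LinearIndepOn ℝ id (R.simples : Set V) := R.simples_indep
  let b := Module.Basis.extend hsi
  let h : V →ₗ[ℝ] ℝ := b.constr ℝ fun i => if (i : V) ∈ R.simples then 1 else 0
  have h_simple : ∀ α ∈ R.simples, h α = 1 := by
    intro α hα
    have hmem : α ∈ hsi.extend (Set.subset_univ _) := hsi.subset_extend _ hα
    have hb : (b ⟨α, hmem⟩ : V) = α := Module.Basis.extend_apply_self hsi ⟨α, hmem⟩
    rw [← hb, Module.Basis.constr_basis]
    exact if_pos hα
  refine ⟨h, h_simple, fun γ hγ => ?_⟩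
  obtain ⟨c, rfl⟩ := R.pos_combo γ hγ
  have hc : ∑ α ∈ R.simples, c α ≠ 0 := by
    intro h0
    rw [Finset.sum_eq_zero_iff] at h0
    exact R.ne_zero_of_mem_pos hγ (Finset.sum_eq_zero fun α hα => by simp [h0 α hα])
  have hsum : h (∑ α ∈ R.simples, (c α : ℝ) • α) = ((∑ α ∈ R.simples, c α : ℕ) : ℝ) := by
    simp only [map_sum, map_smul, Nat.cast_sum, smul_eq_mul]
    exact Finset.sum_congr rfl fun α hα => by rw [h_simple α hα, mul_one]
  rw [hsum]
  exact_mod_cast Nat.one_le_iff_ne_zero.2 hc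

lemma exists_mem_simples_inner_pos {μ : V} (hμ : μ ∈ R.pos) :
    ∃ β ∈ R.simples, 0 < (inner ℝ μ β : ℝ) := by
  by_contra! hcon
  obtain ⟨c, hc⟩ := R.pos_combo μ hμ
  have hμμ : (inner ℝ μ μ : ℝ) = ∑ α ∈ R.simples, (c α : ℝ) * inner ℝ μ α := by
    nth_rw 2 [hc]
    simp only [inner_sum, real_inner_smul_right]
  have : (inner ℝ μ μ : ℝ) ≤ 0 := hμμ ▸ Finset.sum_nonpos fun α hα =>
    mul_nonpos_of_nonneg_of_nonpos (Nat.cast_nonneg _) (hcon α hα)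
  exact R.ne_zero_of_mem_pos hμ (real_inner_self_nonpos.1 this)

/-- Strict Cauchy–Schwarz: by reducedness, the only root that is a positive multiple of `μ` is
`μ` itself. -/
lemma inner_mul_inner_lt {μ β : V} (hμ : μ ∈ R.roots) (hβ : β ∈ R.roots) (hne : μ ≠ β)
    (hip : 0 < (inner ℝ μ β : ℝ)) :
    (inner ℝ μ β : ℝ) * inner ℝ μ β < inner ℝ μ μ * inner ℝ β β := by
  have hμ0 : ‖μ‖ ≠ 0 := norm_ne_zero_iff.2 (R.ne_zero_of_mem_roots hμ)
  have hcs : (inner ℝ μ β : ℝ) < ‖μ‖ * ‖β‖ := by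
    rw [inner_lt_norm_mul_iff_real]
    intro heq
    have hβμ : β = (‖β‖ / ‖μ‖) • μ := by
      rw [div_eq_inv_mul, mul_smul, heq, smul_smul, inv_mul_cancel₀ hμ0, one_smul]
    rcases R.reduced μ hμ _ (hβμ ▸ hβ) with h | h
    · exact hne (by rw [hβμ, h, one_smul])
    · have : (0 : ℝ) ≤ ‖β‖ / ‖μ‖ := by positivity
      linarith
  rw [real_inner_self_eq_norm_mul_norm, real_inner_self_eq_norm_mul_norm]
  nlinarith [mul_self_lt_mul_self hip.le hcs]

/-- Both Cartan integers `⟨μ, β∨⟩` and `⟨β, μ∨⟩` are positive and their product is `< 4`, so one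
of them is `1`, and the corresponding reflection gives `μ - β` (up to sign). -/
lemma sub_mem_roots {μ β : V} (hμ : μ ∈ R.roots) (hβ : β ∈ R.roots) (hne : μ ≠ β)
    (hip : 0 < (inner ℝ μ β : ℝ)) : μ - β ∈ R.roots := by
  have hμμ : (0 : ℝ) < inner ℝ μ μ := real_inner_self_pos.2 (R.ne_zero_of_mem_roots hμ)
  have hββ : (0 : ℝ) < inner ℝ β β := real_inner_self_pos.2 (R.ne_zero_of_mem_roots hβ)
  have hip' : (0 : ℝ) < inner ℝ β μ := real_inner_comm μ β ▸ hip
  obtain ⟨m, hm⟩ := R.crystallographic μ hμ β hβ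
  obtain ⟨n, hn⟩ := R.crystallographic β hβ μ hμ
  have hm0 : (0 : ℝ) < m := hm ▸ by positivity
  have hn0 : (0 : ℝ) < n := hn ▸ by positivity
  have hmn : (m : ℝ) * n < 4 := by
    rw [← hm, ← hn, div_mul_div_comm, div_lt_iff₀ (by positivity), real_inner_comm μ β]
    nlinarith [R.inner_mul_inner_lt hμ hβ hne hip]
  have hm1 : 1 ≤ m := by exact_mod_cast hm0
  have hn1 : 1 ≤ n := by exact_mod_cast hn0
  have hmn' : m * n < 4 := by exact_mod_cast hmn
  rcases (show m = 1 ∨ n = 1 by by_contra! h; nlinarith [h.1.lt_of_le' hm1, h.2.lt_of_le' hn1])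
    with h | h
  · have := R.reflect_mem μ hμ β hβ
    rwa [hm, h, Int.cast_one, one_smul] at this
  · have := R.neg_mem _ (R.reflect_mem β hβ μ hμ)
    rwa [hn, h, Int.cast_one, one_smul, neg_sub] at this

lemma sub_mem_pos {μ β : V} (hμ : μ ∈ R.pos) (hβ : β ∈ R.simples) (hne : μ ≠ β)
    (hip : 0 < (inner ℝ μ β : ℝ)) : μ - β ∈ R.pos := by
  have hβpos := R.simples_subset hβ
  have hroot := R.sub_mem_roots (R.pos_subset hμ) (R.pos_subset hβpos) hne hip
  refine (R.pos_or_neg _ hroot).resolve_right fun hneg => ?_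
  -- otherwise the simple root `β = μ + (β - μ)` would have height at least `2`
  obtain ⟨h, h_simple, h_pos⟩ := R.exists_height
  have := congrArg h (add_sub_cancel μ β)
  rw [map_add] at this
  linarith [h_simple β hβ, h_pos μ hμ, neg_sub μ β ▸ h_pos _ hneg]

lemma exists_linearEquiv_of_mem_weylGroup {w : Function.End V} (hw : w ∈ weylGroup R) :
    ∃ e : V ≃ₗ[ℝ] V, ⇑e = w ∧ Set.MapsTo e.symm R.roots R.roots := by
  induction hw using Submonoid.closure_induction with
  | mem f hf =>
    obtain ⟨δ, hδ, rfl⟩ := hf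
    have hδ0 := R.ne_zero_of_mem_roots hδ
    refine ⟨reflEquiv hδ0, rfl, fun γ hγ => ?_⟩
    rw [reflEquiv_symm_apply]
    exact R.reflect_mem γ hγ δ hδ
  | one => exact ⟨LinearEquiv.refl ℝ V, rfl, fun _ h => h⟩
  | mul x y _ _ hx hy =>
    obtain ⟨e₁, rfl, hr₁⟩ := hx
    obtain ⟨e₂, rfl, hr₂⟩ := hy
    exact ⟨e₂.trans e₁, rfl, hr₂.comp hr₁⟩

section Grading

variable {R : RootSystemData V} {ℓ : V →ₗ[ℝ] ℝ}

lemma nonneg_of_mem_pos (hsimp : ∀ α ∈ R.simples, 0 ≤ ℓ α) {γ : V} (hγ : γ ∈ R.pos) :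
    0 ≤ ℓ γ := by
  obtain ⟨c, rfl⟩ := R.pos_combo γ hγ
  simp only [map_sum, map_smul, smul_eq_mul]
  exact Finset.sum_nonneg fun α hα => mul_nonneg (Nat.cast_nonneg _) (hsimp α hα)

lemma mem_pos_of_mem_gradeOne (hsimp : ∀ α ∈ R.simples, 0 ≤ ℓ α) {γ : V}
    (hγ : γ ∈ gradeOne R ℓ) : γ ∈ R.pos :=
  (R.pos_or_neg γ hγ.1).resolve_right fun hneg => by
    linarith [nonneg_of_mem_pos hsimp hneg, map_neg ℓ γ, hγ.2]

lemma rootLEon_self_add (hsimp : ∀ α ∈ R.simples, 0 ≤ ℓ α) {a : V} (ha : a ∈ R.pos)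
    (h0 : ℓ a = 0) (γ : V) : rootLEon R.simples {α | ℓ α = 0} γ (γ + a) := by
  classical
  obtain ⟨c, hc⟩ := R.pos_combo a ha
  refine ⟨fun α => if ℓ α = 0 then c α else 0, fun α hα => if_neg hα, ?_⟩
  have hterm : ∀ α ∈ R.simples, (c α : ℝ) * ℓ α = 0 := by
    refine (Finset.sum_eq_zero_iff_of_nonneg fun α hα =>
      mul_nonneg (Nat.cast_nonneg _) (hsimp α hα)).1 ?_
    simpa only [hc, map_sum, map_smul, smul_eq_mul] using h0
  rw [hc]
  congr 1
  refine Finset.sum_congr rfl fun α hα => ?_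
  dsimp only
  split_ifs with hα0
  · rfl
  · have hcα : c α = 0 := by exact_mod_cast (mul_eq_zero.1 (hterm α hα)).resolve_right hα0
    simp [hcα]

variable {e : V ≃ₗ[ℝ] V}

lemma invSet_subset_gradeOne (he : ∀ α ∈ R.pos, ℓ α = 0 → e α ∈ R.pos)
    (hab : ∀ γ ∈ R.roots, ℓ γ = -1 ∨ ℓ γ = 0 ∨ ℓ γ = 1)
    (hsimp : ∀ α ∈ R.simples, 0 ≤ ℓ α) : invSet R ⇑e ⊆ gradeOne R ℓ := by
  rintro γ ⟨hγ, hneg⟩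
  refine ⟨R.pos_subset hγ, ?_⟩
  rcases hab γ (R.pos_subset hγ) with h | h | h
  · linarith [nonneg_of_mem_pos hsimp hγ]
  · exact absurd hneg (R.pos_neg_disjoint _ (he γ hγ h))
  · exact h

lemma mem_pos_of_apply_mem_pos (he : ∀ α ∈ R.pos, ℓ α = 0 → e α ∈ R.pos) {x : V}
    (hx : x ∈ R.roots) (h0 : ℓ x = 0) (hex : e x ∈ R.pos) : x ∈ R.pos :=
  (R.pos_or_neg x hx).resolve_right fun hneg =>
    R.pos_neg_disjoint _ hex (by simpa using he _ hneg (by simp [h0]))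

lemma notMem_maximalsRel_of_neg_eq_add (he : ∀ α ∈ R.pos, ℓ α = 0 → e α ∈ R.pos)
    (hsimp : ∀ α ∈ R.simples, 0 ≤ ℓ α) {γ x y : V}
    (hx : x ∈ R.roots) (hy : y ∈ R.roots) (hex : e x ∈ R.pos) (hey : e y ∈ R.pos)
    (hx0 : ℓ x = 0) (hy1 : ℓ y = -1) (hγ : -γ = x + y) :
    γ ∉ maximalsRel (rootLEon R.simples {α | ℓ α = 0}) (invSet R ⇑e) := by
  rintro ⟨-, hmax⟩
  have hγx : γ + x = -y := by rw [← neg_neg γ, hγ]; abel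
  have hmem : γ + x ∈ invSet R ⇑e := by
    refine hγx ▸ ⟨mem_pos_of_mem_gradeOne hsimp ⟨R.neg_mem y hy, ?_⟩, ?_⟩
    · simp [hy1]
    · simpa using hey
  have := hmax _ hmem (rootLEon_self_add hsimp (mem_pos_of_apply_mem_pos he hx hx0 hex) hx0 γ)
  exact R.ne_zero_of_mem_roots hx (add_eq_left.1 this)

lemma neg_apply_mem_simples_of_mem_maximalsRel (he : ∀ α ∈ R.pos, ℓ α = 0 → e α ∈ R.pos)
    (hab : ∀ γ ∈ R.roots, ℓ γ = -1 ∨ ℓ γ = 0 ∨ ℓ γ = 1) (hsimp : ∀ α ∈ R.simples, 0 ≤ ℓ α)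
    (hroots : Set.MapsTo e.symm R.roots R.roots) {γ : V}
    (hγ : γ ∈ maximalsRel (rootLEon R.simples {α | ℓ α = 0}) (invSet R ⇑e)) :
    -(e γ) ∈ R.simples := by
  by_contra hns
  obtain ⟨β, hβ, hip⟩ := R.exists_mem_simples_inner_pos hγ.1.2
  have hν := R.sub_mem_pos hγ.1.2 hβ (fun h => hns (h ▸ hβ)) hip
  set a := e.symm β
  set b := e.symm (-(e γ) - β)
  have ha : a ∈ R.roots := hroots (R.pos_subset (R.simples_subset hβ))
  have hb : b ∈ R.roots := hroots (R.pos_subset hν)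
  have hea : e a ∈ R.pos := by simpa [a] using R.simples_subset hβ
  have heb : e b ∈ R.pos := by simpa [b] using hν
  have hγab : -γ = a + b := e.injective (by simp [a, b])
  have hℓ : ℓ a + ℓ b = -1 := by
    rw [← map_add, ← hγab, map_neg, (invSet_subset_gradeOne he hab hsimp hγ.1).2]
  rcases hab a ha with ha' | ha' | ha' <;> rcases hab b hb with hb' | hb' | hb' <;>
    try linarith
  · exact notMem_maximalsRel_of_neg_eq_add he hsimp hb ha heb hea hb' ha'
      (by rw [hγab, add_comm]) hγ
  · exact notMem_maximalsRel_of_neg_eq_add he hsimp ha hb hea heb ha' hb' hγab hγ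

lemma mem_maximalsRel_of_neg_apply_mem_simples (he : ∀ α ∈ R.pos, ℓ α = 0 → e α ∈ R.pos)
    {γ : V} (hγ : γ ∈ invSet R ⇑e) (hs : -(e γ) ∈ R.simples) :
    γ ∈ maximalsRel (rootLEon R.simples {α | ℓ α = 0}) (invSet R ⇑e) := by
  refine ⟨hγ, ?_⟩
  rintro _ ⟨-, hγ'⟩ ⟨c, hc, rfl⟩
  obtain ⟨h, h_simple, h_pos⟩ := R.exists_height
  have hpos : ∀ α ∈ R.simples, c α ≠ 0 → 0 < h (e α) := fun α hα hcα =>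
    one_pos.trans_le (h_pos _ (he α (R.simples_subset hα) (by_contra fun h0 => hcα (hc α h0))))
  have hterm : ∀ α ∈ R.simples, 0 ≤ (c α : ℝ) * h (e α) := fun α hα => by
    by_cases hcα : c α = 0
    · simp [hcα]
    · exact mul_nonneg (Nat.cast_nonneg _) (hpos α hα hcα).le
  have hsum : ∑ α ∈ R.simples, (c α : ℝ) * h (e α) ≤ 0 := by
    have := h_pos _ hγ'
    simp only [map_add, map_neg, map_sum, map_smul, smul_eq_mul, neg_add] at this
    linarith [h_simple _ hs, map_neg h (e γ)]
  have hzero := (Finset.sum_eq_zero_iff_of_nonneg hterm).1 (hsum.antisymm (Finset.sum_nonneg hterm))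
  refine add_eq_left.2 (Finset.sum_eq_zero fun α hα => ?_)
  by_cases hcα : c α = 0
  · simp [hcα]
  · exact absurd (hzero α hα) (mul_ne_zero (by exact_mod_cast hcα) (hpos α hα hcα).ne')

end Grading

end RootSystemData

/-- Abelian case: for `w ∈ W⁰`, a root `γ ∈ N(w)` is a maximal element of `N(w)` (in the
order induced from `Δ(1)`) iff `w(γ) ∈ −Π`; equivalently `max(N(w)) = −w⁻¹(Π) ∩ Δ(1)`. -/
theorem abelian_max_of_inversion_set (R : RootSystemData V) (ℓ : V →ₗ[ℝ] ℝ)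
    (hab : ∀ γ ∈ R.roots, ℓ γ = -1 ∨ ℓ γ = 0 ∨ ℓ γ = 1)
    (hsimp : ∀ α ∈ R.simples, 0 ≤ ℓ α)
    (w : Function.End V) (hw : w ∈ minLengthReps R ℓ) :
    (∀ γ ∈ invSet R w,
        (γ ∈ maximalsRel (rootLEon R.simples {α | ℓ α = 0}) (invSet R w) ↔
          -(w γ) ∈ R.simples)) ∧
    maximalsRel (rootLEon R.simples {α | ℓ α = 0}) (invSet R w)
      = {γ : V | -(w γ) ∈ R.simples} ∩ gradeOne R ℓ := by
  obtain ⟨e, rfl, hroots⟩ := R.exists_linearEquiv_of_mem_weylGroup hw.1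
  have he := hw.2
  have key : ∀ γ ∈ invSet R ⇑e,
      (γ ∈ maximalsRel (rootLEon R.simples {α | ℓ α = 0}) (invSet R ⇑e) ↔ -(e γ) ∈ R.simples) :=
    fun γ hγ => ⟨RootSystemData.neg_apply_mem_simples_of_mem_maximalsRel he hab hsimp hroots,
      RootSystemData.mem_maximalsRel_of_neg_apply_mem_simples he hγ⟩
  refine ⟨key, Set.ext fun γ => ⟨fun hγ => ?_, fun ⟨hs, hg⟩ => ?_⟩⟩
  · exact ⟨(key γ hγ.1).1 hγ, RootSystemData.invSet_subset_gradeOne he hab hsimp hγ.1⟩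
  · exact (key γ ⟨RootSystemData.mem_pos_of_mem_gradeOne hsimp hg, R.simples_subset hs⟩).2 hs
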